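/- arXiv:1902.00399 — 3 statements merged into one kernel-verified Lean document; each statement's English description precedes it below -/
import Mathlib

section
/- Let L be a graded atomic lattice whose set A of atoms is independent. Then L is isomorphic to the Boolean lattice B(A): the map B(A) → L sending a subset {a_1,…,a_k} ⊆ A to the join a_1 ∨ … ∨ a_k (the empty set to 0) is an isomorphism of lattices. -/
/-!
Independence of the atoms means that an atom `a ∈ A` lies below the join of `S ⊆ A` only if
`a ∈ S`: otherwise `a` would be absorbed into the join of `A \ {a}`, a proper subset of `A` with the
same join as `A`. Hence `S ↦ ⋁ S` reflects the order on subsets of `A`, so it is an order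
embedding, and atomicity makes it surjective.
-/

def Finset.JoinIndependent {L : Type*} [SemilatticeSup L] [OrderBot L] (A : Finset L) : Prop :=
  ∀ T ⊂ A, T.sup id < A.sup id

namespace Finset.JoinIndependent

variable {L : Type*} [SemilatticeSup L] [OrderBot L] {A : Finset L}

theorem mem_of_le_sup (hA : A.JoinIndependent) {a : L} (ha : a ∈ A) {S : Finset L}
    (hS : S ⊆ A) (haS : a ≤ S.sup id) : a ∈ S := by
  classical
  by_contra ha_notMem
  have hS_erase : S ⊆ A.erase a := fun x hx ↦
    mem_erase.mpr ⟨fun hxa ↦ ha_notMem (hxa ▸ hx), hS hx⟩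
  have ha_le : a ≤ (A.erase a).sup id := haS.trans (sup_mono hS_erase)
  have h_sup_eq : A.sup id = (A.erase a).sup id := by
    rw [← insert_erase ha, sup_insert, id, sup_eq_right.mpr ha_le, erase_insert_eq_erase,
      erase_idem]
  exact (hA _ (erase_ssubset ha)).ne' h_sup_eq

theorem sup_le_sup_iff (hA : A.JoinIndependent) {S T : Finset L} (hS : S ⊆ A) (hT : T ⊆ A) :
    S.sup id ≤ T.sup id ↔ S ⊆ T :=
  ⟨fun h _ hx ↦ hA.mem_of_le_sup (hS hx) hT ((le_sup (f := id) hx).trans h), fun h ↦ sup_mono h⟩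

def supEmbedding (hA : A.JoinIndependent) : {S : Finset L // S ⊆ A} ↪o L :=
  OrderEmbedding.ofMapLEIff (fun S ↦ S.1.sup id) fun S T ↦ hA.sup_le_sup_iff S.2 T.2

end Finset.JoinIndependent

theorem graded_atomic_lattice_with_independent_atoms_is_boolean_general
    {L : Type*} [Lattice L] [OrderBot L]
    (A : Finset L)
    -- `L` is atomic: every element is a join of atoms:
    (hAtomic : ∀ x : L, ∃ S ⊆ A, S.sup id = x)
    -- the set `A` of atoms is independent:
    (hInd : ∀ T : Finset L, T ⊂ A → T.sup id < A.sup id) :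
    ∃ e : {s : Finset L // s ⊆ A} ≃o L, ∀ s : {s : Finset L // s ⊆ A}, e s = s.1.sup id := by
  have hA : A.JoinIndependent := hInd
  have h_surj : Function.Surjective hA.supEmbedding := fun x ↦
    let ⟨S, hS, hSx⟩ := hAtomic x
    ⟨⟨S, hS⟩, hSx⟩
  exact ⟨OrderIso.ofSurjective hA.supEmbedding h_surj, fun _ ↦ rfl⟩

/-- Let `L` be a graded atomic lattice whose set `A` of atoms is
independent.  Then `L` is isomorphic to the Boolean lattice `B(A)` of subsets of `A`:
the map `B(A) → L` sending a subset of `A` to its join (the empty set to `⊥`) is an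
isomorphism of lattices. -/
theorem graded_atomic_lattice_with_independent_atoms_is_boolean
    {L : Type*} [Lattice L] [OrderBot L] [Fintype L]
    (A : Finset L) (hA : ∀ a : L, a ∈ A ↔ IsAtom a)
    -- `L` is graded (by the standard rank function = height):
    (hGraded : ∀ x y : L, x ⋖ y → Order.height y = Order.height x + 1)
    -- `L` is atomic: every element is a join of atoms:
    (hAtomic : ∀ x : L, ∃ S ⊆ A, S.sup id = x)
    -- the set `A` of atoms is independent:
    (hInd : ∀ T : Finset L, T ⊂ A → T.sup id < A.sup id) :
    ∃ e : {s : Finset L // s ⊆ A} ≃o L, ∀ s : {s : Finset L // s ⊆ A}, e s = s.1.sup id :=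
  graded_atomic_lattice_with_independent_atoms_is_boolean_general A hAtomic hInd
end

section
/- Let L be a geometric lattice with atom set A that is not isomorphic to the Boolean lattice B(A). Then there exists a dependent atom a ∈ A; and for such an atom a, the deletion L_a has exactly |A| − 1 atoms (namely A∖{a}) and rk(L_a) = rk(L), while the restriction L^a has at most |A| − 1 atoms and rk(L^a) = rk(L) − 1. -/
/-!
If no atom is dependent, every set of atoms is independent, so an atom below `⋁ T` lies in `T`
and `s ↦ ⋁ s` is an order isomorphism from the subsets of `A` onto `L`: `L` is Boolean.

A dependent atom `a` lies below `⋁ (A ∖ {a})`, so deleting it keeps the top element. By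
submodularity, joining an atom `b ≰ x` raises the height by exactly one; joining the atoms one
at a time therefore builds chains from `⊥` inside `L_a` and from `a` inside `L^a` of lengths
`rk L` and `rk L - 1`. The covers of `a` are the joins `a ⊔ b` with `b ∈ A ∖ {a}`.
-/

/-- A finite set `S` of elements (atoms) of a lattice is independent if the join of
every proper subset is strictly smaller than the join of `S`. -/
def FinsetIndep {L : Type*} [Lattice L] [OrderBot L] (S : Finset L) : Prop :=
  ∀ T : Finset L, T ⊂ S → T.sup id < S.sup id

/-- `a` is a dependent atom (w.r.t. the atom set `A`): it belongs to a dependent set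
`S` of atoms with `⋁(S∖{a}) = ⋁S`. -/
def IsDepAtom {L : Type*} [Lattice L] [OrderBot L] [DecidableEq L]
    (A : Finset L) (a : L) : Prop :=
  a ∈ A ∧ ∃ S ⊆ A, ¬ FinsetIndep S ∧ a ∈ S ∧ (S.erase a).sup id = S.sup id

/-- The deletion `L_a`: the set of joins of sets of atoms not containing `a`
(the empty join being `⊥`). -/
def DelSet {L : Type*} [Lattice L] [OrderBot L] [DecidableEq L]
    (A : Finset L) (a : L) : Set L :=
  {x | ∃ S ⊆ A.erase a, S.sup id = x}

open Order

section Height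

variable {α : Type*} [Preorder α] [Finite α]

lemma Order.height_ne_top_of_finite (x : α) : height x ≠ ⊤ := by
  have := Fintype.ofFinite α
  refine ne_top_of_le_ne_top (ENat.natCast_ne_top (Fintype.card α)) (height_le fun p _ => ?_)
  exact_mod_cast p.length_lt_card.le

lemma Order.height_coe_add_one_le [OrderBot α] {P : Set α} (hP : ∀ x ∈ P, ⊥ < x) (y : P) :
    height y + 1 ≤ height (y : α) := by
  obtain ⟨p, hlast, hlen⟩ :=
    exists_series_of_height_eq_coe y (ENat.natCast_toNat (height_ne_top_of_finite y)).symm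
  let q := (p.map _ (Subtype.strictMono_coe (· ∈ P))).cons ⊥ (hP _ p.head.2)
  calc
    height y + 1 = q.length := by
      simp [q, hlen, ENat.natCast_toNat (height_ne_top_of_finite y)]
    _ ≤ height q.last := length_le_height_last
    _ = height (y : α) := by rw [RelSeries.last_cons, LTSeries.last_map, hlast]

end Height

lemma IsAtom.height_eq_one {α : Type*} [PartialOrder α] [OrderBot α] {b : α} (hb : IsAtom b) :
    height b = 1 := by
  refine le_antisymm (height_le_coe_iff.mpr fun y hy => ?_) ?_
  · simp [hb.lt_iff.mp hy]
  · simpa using height_add_one_le hb.bot_lt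

section Submodular

variable {L : Type*} [Lattice L] [OrderBot L]

lemma height_sup_eq_add_one_of_isAtom
    (hGeo : ∀ x y : L, height (x ⊔ y) + height (x ⊓ y) ≤ height x + height y)
    {x b : L} (hb : IsAtom b) (hbx : ¬ b ≤ x) : height (x ⊔ b) = height x + 1 := by
  have hinf : x ⊓ b = ⊥ := (hb.le_iff.mp inf_le_right).resolve_right fun h => hbx (h ▸ inf_le_left)
  refine le_antisymm ?_ (height_add_one_le (left_lt_sup.mpr hbx))
  simpa [hinf, hb.height_eq_one] using hGeo x b

lemma exists_ltSeries_last_eq_sup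
    (hGeo : ∀ x y : L, height (x ⊔ y) + height (x ⊓ y) ≤ height x + height y)
    {P : Set L} {B : Finset L} (hB : ∀ b ∈ B, IsAtom b) (hP : ∀ z ∈ P, ∀ b ∈ B, z ⊔ b ∈ P)
    {x : L} (hx : x ∈ P) :
    ∃ p : LTSeries P, (p.last : L) = x ⊔ B.sup id ∧ height (p.last : L) = height x + p.length := by
  classical
  induction B using Finset.induction_on with
  | empty => exact ⟨RelSeries.singleton _ ⟨x, hx⟩, by simp, by simp⟩
  | insert b B _ ih =>
    obtain ⟨p, hlast, hheight⟩ := ih (fun c hc => hB c (Finset.mem_insert_of_mem hc))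
      (fun z hz c hc => hP z hz c (Finset.mem_insert_of_mem hc))
    have hb := hB b (Finset.mem_insert_self b B)
    have hsup : x ⊔ (insert b B).sup id = (p.last : L) ⊔ b := by
      rw [Finset.sup_insert, hlast, id, sup_comm b, sup_assoc]
    by_cases hbp : b ≤ p.last
    · exact ⟨p, by rw [hsup, sup_eq_left.mpr hbp], hheight⟩
    · refine ⟨p.snoc ⟨_, hP _ p.last.2 b (Finset.mem_insert_self b B)⟩ (left_lt_sup.mpr hbp),
        by rw [RelSeries.last_snoc, hsup], ?_⟩
      simp [height_sup_eq_add_one_of_isAtom hGeo hb hbp, hheight, add_assoc]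

lemma height_le_add_height_of_eq_sup
    (hGeo : ∀ x y : L, height (x ⊔ y) + height (x ⊓ y) ≤ height x + height y)
    {P : Set L} {B : Finset L} (hB : ∀ b ∈ B, IsAtom b) (hP : ∀ z ∈ P, ∀ b ∈ B, z ⊔ b ∈ P)
    {x : L} (hx : x ∈ P) (y : P) (hy : (y : L) = x ⊔ B.sup id) :
    height (y : L) ≤ height x + height y := by
  obtain ⟨p, hlast, hheight⟩ := exists_ltSeries_last_eq_sup hGeo hB hP hx
  obtain rfl : p.last = y := Subtype.ext (hlast.trans hy.symm)
  rw [hheight]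
  gcongr
  exact length_le_height_last

end Submodular

section Atoms

variable {L : Type*} [Lattice L] [OrderBot L] {A : Finset L}

lemma exists_sup_eq_of_covBy (hAtomic : ∀ x : L, ∃ S ⊆ A, S.sup id = x) {a x : L} (hax : a ⋖ x) :
    ∃ b ∈ A, ¬ b ≤ a ∧ a ⊔ b = x := by
  obtain ⟨S, hSA, rfl⟩ := hAtomic x
  obtain ⟨b, hbS, hba⟩ : ∃ b ∈ S, ¬ b ≤ a := by
    by_contra! h
    exact hax.lt.not_ge (Finset.sup_le h)
  exact ⟨b, hSA hbS, hba, (sup_le hax.le (Finset.le_sup (f := id) hbS)).eq_of_not_lt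
    (hax.2 (left_lt_sup.mpr hba))⟩

variable [DecidableEq L]

lemma FinsetIndep.not_le_sup {S : Finset L} {b : L} (h : FinsetIndep (insert b S)) (hb : b ∉ S) :
    ¬ b ≤ S.sup id := fun hle => by
  simpa [Finset.sup_insert, sup_eq_right.mpr hle] using h S (Finset.ssubset_insert hb)

lemma exists_isDepAtom_of_not_finsetIndep {S : Finset L} (hSA : S ⊆ A) (hS : ¬ FinsetIndep S) :
    ∃ a, IsDepAtom A a := by
  simp only [FinsetIndep, not_forall] at hS
  obtain ⟨T, hTS, hT⟩ := hS
  obtain ⟨a, haS, haT⟩ := Finset.exists_of_ssubset hTS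
  have hTa : T ⊆ S.erase a := fun b hb => Finset.mem_erase.mpr ⟨fun h => haT (h ▸ hb), hTS.1 hb⟩
  refine ⟨a, hSA haS, S, hSA, fun h => hT (h T hTS), haS, ?_⟩
  refine le_antisymm (Finset.sup_mono (Finset.erase_subset a S)) ?_
  exact (not_lt_iff_le_imp_ge.mp hT (Finset.sup_mono hTS.1)).trans (Finset.sup_mono hTa)

lemma sup_le_sup_iff_subset_of_forall_finsetIndep (hInd : ∀ S ⊆ A, FinsetIndep S)
    {S T : Finset L} (hS : S ⊆ A) (hT : T ⊆ A) : S.sup id ≤ T.sup id ↔ S ⊆ T := by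
  refine ⟨fun hle b hb => ?_, Finset.sup_mono⟩
  by_contra hbT
  exact (hInd _ (Finset.insert_subset (hS hb) hT)).not_le_sup hbT
    ((Finset.le_sup (f := id) hb).trans hle)

lemma nonempty_orderIso_of_forall_finsetIndep (hAtomic : ∀ x : L, ∃ S ⊆ A, S.sup id = x)
    (hInd : ∀ S ⊆ A, FinsetIndep S) : Nonempty ({s : Finset L // s ⊆ A} ≃o L) := by
  let f : {s : Finset L // s ⊆ A} ↪o L := OrderEmbedding.ofMapLEIff (fun s => s.1.sup id)
    fun s t => sup_le_sup_iff_subset_of_forall_finsetIndep hInd s.2 t.2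
  refine ⟨RelIso.ofSurjective f fun x => ?_⟩
  obtain ⟨S, hSA, rfl⟩ := hAtomic x
  exact ⟨⟨S, hSA⟩, rfl⟩

lemma IsDepAtom.sup_erase_eq {a : L} (ha : IsDepAtom A a) : (A.erase a).sup id = A.sup id := by
  obtain ⟨haA, S, hSA, -, haS, hS⟩ := ha
  have hle : a ≤ (A.erase a).sup id := calc
    a ≤ S.sup id := Finset.le_sup (f := id) haS
    _ = (S.erase a).sup id := hS.symm
    _ ≤ (A.erase a).sup id := Finset.sup_mono (Finset.erase_subset_erase a hSA)
  conv_rhs => rw [← Finset.insert_erase haA, Finset.sup_insert]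
  exact (sup_eq_right.mpr hle).symm

lemma delSet_atoms_eq (hA : ∀ b ∈ A, IsAtom b) (a : L) :
    {x : L | x ∈ DelSet A a ∧ ⊥ < x ∧ ∀ z ∈ DelSet A a, z < x → z = ⊥} = A.erase a := by
  have hsingleton {b : L} (hb : b ∈ A.erase a) : b ∈ DelSet A a :=
    ⟨{b}, Finset.singleton_subset_iff.mpr hb, Finset.sup_singleton⟩
  ext x
  constructor
  · rintro ⟨⟨S, hS, rfl⟩, hbot, hmin⟩
    obtain ⟨b, hb⟩ : S.Nonempty := Finset.nonempty_iff_ne_empty.mpr (by rintro rfl; simp at hbot)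
    have hbS : b ≤ S.sup id := Finset.le_sup (f := id) hb
    obtain rfl | hlt := hbS.eq_or_lt
    · exact hS hb
    · exact absurd (hmin b (hsingleton (hS hb)) hlt) (hA b (Finset.mem_of_mem_erase (hS hb))).1
  · intro hx
    have hxA : IsAtom x := hA x (Finset.mem_of_mem_erase hx)
    exact ⟨hsingleton hx, hxA.bot_lt, fun z _ hz => hxA.2 z hz⟩

lemma ncard_setOf_covBy_le (hAtomic : ∀ x : L, ∃ S ⊆ A, S.sup id = x) {a : L} :
    {x : L | a ⋖ x}.ncard ≤ (A.erase a).card := by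
  have hsub : {x : L | a ⋖ x} ⊆ (a ⊔ ·) '' ↑(A.erase a) := fun x hx => by
    obtain ⟨b, hbA, hba, rfl⟩ := exists_sup_eq_of_covBy hAtomic hx
    exact ⟨b, Finset.mem_erase.mpr ⟨fun h => hba h.le, hbA⟩, rfl⟩
  calc {x : L | a ⋖ x}.ncard ≤ ((a ⊔ ·) '' ↑(A.erase a)).ncard :=
        Set.ncard_le_ncard hsub ((A.erase a).finite_toSet.image _)
    _ ≤ (A.erase a).card := (Set.ncard_image_le (A.erase a).finite_toSet).trans_eq
        (Set.ncard_coe_finset _)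

end Atoms

section Rank

variable {L : Type*} [Lattice L] [OrderBot L] [OrderTop L] {A : Finset L}

lemma height_delSet_sup_erase [DecidableEq L]
    (hGeo : ∀ x y : L, height (x ⊔ y) + height (x ⊓ y) ≤ height x + height y)
    (hA : ∀ b ∈ A, IsAtom b) {a : L} (htop : (A.erase a).sup id = ⊤) :
    height (⟨(A.erase a).sup id, ⟨A.erase a, Finset.Subset.refl _, rfl⟩⟩ : ↥(DelSet A a)) =
      height (⊤ : L) := by
  refine le_antisymm ((height_le_height_apply_of_strictMono _ (Subtype.strictMono_coe _) _).trans
    (height_mono le_top)) ?_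
  have hclosed : ∀ z ∈ DelSet A a, ∀ b ∈ A.erase a, z ⊔ b ∈ DelSet A a := by
    rintro _ ⟨S, hS, rfl⟩ b hb
    exact ⟨insert b S, Finset.insert_subset hb hS, by rw [Finset.sup_insert, sup_comm]; rfl⟩
  simpa [htop] using height_le_add_height_of_eq_sup hGeo
    (fun b hb => hA b (Finset.mem_of_mem_erase hb)) hclosed ⟨∅, Finset.empty_subset _, rfl⟩ _
    (by simp [htop])

lemma height_top_Ici [Finite L]
    (hGeo : ∀ x y : L, height (x ⊔ y) + height (x ⊓ y) ≤ height x + height y)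
    (hA : ∀ b ∈ A, IsAtom b) (htop : A.sup id = ⊤) {a : L} (ha : IsAtom a) :
    height (⟨⊤, le_top⟩ : ↥{x : L | a ≤ x}) = height (⊤ : L) - 1 := by
  have hlower := height_coe_add_one_le (fun x (hx : a ≤ x) => ha.bot_lt.trans_le hx)
    (⟨⊤, le_top⟩ : ↥{x : L | a ≤ x})
  have hupper := height_le_add_height_of_eq_sup hGeo hA (fun z hz b _ => le_sup_of_le_left hz)
    (le_refl a) (⟨⊤, le_top⟩ : ↥{x : L | a ≤ x}) (by simp [htop])
  rw [ha.height_eq_one, add_comm] at hupper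
  have hTop : height (⊤ : L) = height (⟨⊤, le_top⟩ : ↥{x : L | a ≤ x}) + 1 :=
    le_antisymm hupper hlower
  rw [hTop, (ENat.addLECancellable_of_ne_top ENat.one_ne_top).add_tsub_cancel_right]

end Rank

theorem geometric_lattice_dependent_atom_deletion_restriction_general
    {L : Type*} [Lattice L] [OrderBot L] [OrderTop L] [Fintype L] [DecidableEq L]
    (A : Finset L) (hA : ∀ a : L, a ∈ A ↔ IsAtom a)
    -- `L` is atomic: every element is a join of atoms:
    (hAtomic : ∀ x : L, ∃ S ⊆ A, S.sup id = x)
    -- the rank function is submodular (`L` is geometric):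
    (hGeo : ∀ x y : L,
      Order.height (x ⊔ y) + Order.height (x ⊓ y) ≤ Order.height x + Order.height y)
    -- `L` is not Boolean:
    (hNotBool : IsEmpty ({s : Finset L // s ⊆ A} ≃o L)) :
    (∃ a : L, IsDepAtom A a) ∧
    ∀ a : L, IsDepAtom A a →
      -- the atoms of the deletion `L_a` (minimal nonzero elements of `L_a`) are `A∖{a}`:
      ({x : L | x ∈ DelSet A a ∧ ⊥ < x ∧ ∀ z ∈ DelSet A a, z < x → z = ⊥}
          = (↑(A.erase a) : Set L)) ∧
      (A.erase a).card = A.card - 1 ∧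
      -- `rk(L_a) = rk(L)`, the rank being the height of the maximum `⋁(A∖{a})` in `L_a`:
      Order.height
          (⟨(A.erase a).sup id, ⟨A.erase a, Finset.Subset.refl _, rfl⟩⟩ : ↥(DelSet A a))
        = Order.height (⊤ : L) ∧
      -- the restriction `L^a` has at most `|A| − 1` atoms (its atoms are covers of `a`):
      {x : L | a ⋖ x}.ncard ≤ A.card - 1 ∧
      -- `rk(L^a) = rk(L) − 1`, the rank being the height of `⊤` in `L^a = L_{≥a}`:
      Order.height (⟨(⊤ : L), le_top⟩ : ↥{x : L | a ≤ x})
        = Order.height (⊤ : L) - 1 := by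
  have hAtoms : ∀ b ∈ A, IsAtom b := fun b => (hA b).mp
  have htop : A.sup id = ⊤ := by
    obtain ⟨S, hSA, hS⟩ := hAtomic ⊤
    exact top_le_iff.mp (hS ▸ Finset.sup_mono hSA)
  refine ⟨?_, fun a ha => ?_⟩
  · by_contra! hNoDep
    refine hNotBool.false (nonempty_orderIso_of_forall_finsetIndep hAtomic fun S hSA => ?_).some
    by_contra hS
    exact hNoDep _ (exists_isDepAtom_of_not_finsetIndep hSA hS).choose_spec
  have hcard := Finset.card_erase_of_mem ha.1
  exact ⟨delSet_atoms_eq hAtoms a, hcard,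
    height_delSet_sup_erase hGeo hAtoms (ha.sup_erase_eq.trans htop),
    hcard ▸ ncard_setOf_covBy_le hAtomic, height_top_Ici hGeo hAtoms htop (hAtoms a ha.1)⟩

/-- A geometric lattice `L` with atom set `A` that is not Boolean has
a dependent atom `a`; and for any dependent atom `a`, the deletion `L_a` has exactly
`|A| − 1` atoms, namely `A∖{a}`, with `rk(L_a) = rk(L)`, while the restriction `L^a`
has at most `|A| − 1` atoms and `rk(L^a) = rk(L) − 1`. -/
theorem geometric_lattice_dependent_atom_deletion_restriction
    {L : Type*} [Lattice L] [OrderBot L] [OrderTop L] [Fintype L] [DecidableEq L]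
    (A : Finset L) (hA : ∀ a : L, a ∈ A ↔ IsAtom a)
    -- `L` is graded (by the standard rank function = height):
    (hGraded : ∀ x y : L, x ⋖ y → Order.height y = Order.height x + 1)
    -- `L` is atomic: every element is a join of atoms:
    (hAtomic : ∀ x : L, ∃ S ⊆ A, S.sup id = x)
    -- the rank function is submodular (`L` is geometric):
    (hGeo : ∀ x y : L,
      Order.height (x ⊔ y) + Order.height (x ⊓ y) ≤ Order.height x + Order.height y)
    -- `L` is not Boolean:
    (hNotBool : IsEmpty ({s : Finset L // s ⊆ A} ≃o L)) :
    (∃ a : L, IsDepAtom A a) ∧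
    ∀ a : L, IsDepAtom A a →
      -- the atoms of the deletion `L_a` (minimal nonzero elements of `L_a`) are `A∖{a}`:
      ({x : L | x ∈ DelSet A a ∧ ⊥ < x ∧ ∀ z ∈ DelSet A a, z < x → z = ⊥}
          = (↑(A.erase a) : Set L)) ∧
      (A.erase a).card = A.card - 1 ∧
      -- `rk(L_a) = rk(L)`, the rank being the height of the maximum `⋁(A∖{a})` in `L_a`:
      Order.height
          (⟨(A.erase a).sup id, ⟨A.erase a, Finset.Subset.refl _, rfl⟩⟩ : ↥(DelSet A a))
        = Order.height (⊤ : L) ∧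
      -- the restriction `L^a` has at most `|A| − 1` atoms (its atoms are covers of `a`):
      {x : L | a ⋖ x}.ncard ≤ A.card - 1 ∧
      -- `rk(L^a) = rk(L) − 1`, the rank being the height of `⊤` in `L^a = L_{≥a}`:
      Order.height (⟨(⊤ : L), le_top⟩ : ↥{x : L | a ≤ x})
        = Order.height (⊤ : L) - 1 :=
  geometric_lattice_dependent_atom_deletion_restriction_general A hA hAtomic hGeo hNotBool
end

section
/- Let L be a graded atomic lattice with atom set A, let a ∈ A, and set L₁ = L∖{0, a}. For x ∈ L∖{0} let B_x = {b ∈ A∖{a} : b ≤ x}, and define t : L₁ → L_a∖{0} by t(x) = x if x ∈ L_a and t(x) = ⋁B_x otherwise. Then t is well defined (B_x ≠ ∅ for x ∈ L₁ and t(x) ∈ L_a∖{0}), t is order-preserving, and for every x ∈ L_a∖{0} the preimage t^{-1}({y ∈ L_a∖{0} : y ≥ x}) has minimum element x. -/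
/-- The set `B_x = {b ∈ A∖{a} : b ≤ x}`. -/
noncomputable def Bset {L : Type*} [Lattice L] [OrderBot L] [DecidableEq L]
    (A : Finset L) (a x : L) : Finset L :=
  letI := Classical.dec
  A.filter (fun b => b ≠ a ∧ b ≤ x)

/-- The map `t : L₁ → L_a∖{0}`: `t(x) = x` if `x ∈ L_a`, and `t(x) = ⋁B_x` otherwise. -/
noncomputable def tmap {L : Type*} [Lattice L] [OrderBot L] [DecidableEq L]
    (A : Finset L) (a x : L) : L :=
  letI := Classical.dec
  if x ∈ DelSet A a then x else (Bset A a x).sup id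


/-!
For `x ∈ L_a` the atoms `b ≠ a` below `x` already join to `x`, so `t(x) = ⋁B_x` for every `x`.
Hence `t` is monotone, deflationary (`t(x) ≤ x`), lands in `L_a` and fixes `L_a`; the preimage
statement follows from `x ≤ t(y) ≤ y`. `B_x` is nonempty because `x` is a join of atoms, and if
all of them were `a` then `x ≤ a`, i.e. `x ∈ {0, a}`.
-/

section Deletion

variable {L : Type*} [Lattice L] [OrderBot L] [DecidableEq L] {A : Finset L} {a x b : L}

lemma mem_Bset : b ∈ Bset A a x ↔ b ∈ A ∧ b ≠ a ∧ b ≤ x := by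
  classical
  simp [Bset]

lemma sup_Bset_le : (Bset A a x).sup id ≤ x :=
  Finset.sup_le fun _ hb => (mem_Bset.1 hb).2.2

lemma le_sup_Bset_of_mem_delSet (hx : x ∈ DelSet A a) : x ≤ (Bset A a x).sup id := by
  obtain ⟨S, hS, rfl⟩ := hx
  refine Finset.sup_mono fun b hb => mem_Bset.2 ⟨?_, ?_, Finset.le_sup (f := id) hb⟩
  · exact Finset.mem_of_mem_erase (hS hb)
  · exact Finset.ne_of_mem_erase (hS hb)

lemma tmap_eq_sup_Bset : tmap A a x = (Bset A a x).sup id := by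
  unfold tmap
  split_ifs with hx
  -- `convert`: `tmap` decides membership with `Classical.dec`, not the ambient `DecidableEq L`
  · exact le_antisymm (le_sup_Bset_of_mem_delSet (by convert hx)) sup_Bset_le
  · rfl

lemma tmap_le : tmap A a x ≤ x :=
  tmap_eq_sup_Bset.trans_le sup_Bset_le

lemma tmap_mem_delSet : tmap A a x ∈ DelSet A a := by
  refine ⟨Bset A a x, fun b hb => ?_, tmap_eq_sup_Bset.symm⟩
  obtain ⟨hbA, hba, -⟩ := mem_Bset.1 hb
  exact Finset.mem_erase.2 ⟨hba, hbA⟩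

lemma tmap_monotone : Monotone (tmap A a) := by
  intro x y hxy
  rw [tmap_eq_sup_Bset, tmap_eq_sup_Bset]
  refine Finset.sup_mono fun b hb => ?_
  obtain ⟨hbA, hba, hbx⟩ := mem_Bset.1 hb
  exact mem_Bset.2 ⟨hbA, hba, hbx.trans hxy⟩

lemma le_tmap_of_mem_delSet (hx : x ∈ DelSet A a) : x ≤ tmap A a x :=
  (le_sup_Bset_of_mem_delSet hx).trans_eq tmap_eq_sup_Bset.symm

lemma tmap_ne_bot (hA : ⊥ ∉ A) (hB : (Bset A a x).Nonempty) : tmap A a x ≠ ⊥ := by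
  obtain ⟨b, hb⟩ := hB
  have hbA : b ∈ A := (mem_Bset.1 hb).1
  have hb_le : b ≤ tmap A a x := (Finset.le_sup (f := id) hb).trans_eq tmap_eq_sup_Bset.symm
  intro h
  rw [h, le_bot_iff] at hb_le
  exact hA (hb_le ▸ hbA)

lemma Bset_nonempty (ha : IsAtom a) (hxA : ∃ S ⊆ A, S.sup id = x) (hx : x ≠ ⊥) (hxa : x ≠ a) :
    (Bset A a x).Nonempty := by
  obtain ⟨S, hS, rfl⟩ := hxA
  by_contra hB
  have hS_le : S.sup id ≤ a := Finset.sup_le fun b hb => by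
    by_contra hba
    exact hB ⟨b, mem_Bset.2 ⟨hS hb, fun h => hba h.le, Finset.le_sup (f := id) hb⟩⟩
  exact hx (ha.2 _ (hS_le.lt_of_ne hxa))

lemma self_notMem_delSet (ha : IsAtom a) (hA : ⊥ ∉ A) : a ∉ DelSet A a := by
  rintro ⟨S, hS, hSa⟩
  obtain rfl | ⟨b, hb⟩ := S.eq_empty_or_nonempty
  · exact ha.1 hSa.symm
  · have hba : b < a := lt_of_le_of_ne (hSa ▸ Finset.le_sup (f := id) hb)
      (Finset.ne_of_mem_erase (hS hb))
    exact hA (ha.2 b hba ▸ Finset.mem_of_mem_erase (hS hb))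

end Deletion

theorem tmap_well_defined_monotone_preimage_min_general
    {L : Type*} [Lattice L] [OrderBot L] [DecidableEq L]
    (A : Finset L) (hA : ∀ a : L, a ∈ A ↔ IsAtom a)
    -- `L` is atomic: every element is a join of atoms:
    (hAtomic : ∀ x : L, ∃ S ⊆ A, S.sup id = x)
    (a : L) (ha : a ∈ A) :
    -- `B_x` is nonempty for `x ∈ L₁ = L∖{0,a}`:
    (∀ x : L, x ≠ ⊥ → x ≠ a → (Bset A a x).Nonempty) ∧
    -- `t` maps `L₁` into `L_a∖{0}`:
    (∀ x : L, x ≠ ⊥ → x ≠ a → tmap A a x ∈ DelSet A a ∧ tmap A a x ≠ ⊥) ∧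
    -- `t` is a poset map:
    (∀ x y : L, x ≠ ⊥ → x ≠ a → y ≠ ⊥ → y ≠ a → x ≤ y → tmap A a x ≤ tmap A a y) ∧
    -- for `x ∈ L_a∖{0}`, the preimage of `{y ∈ L_a∖{0} : y ≥ x}` has minimum `x`:
    (∀ x : L, x ∈ DelSet A a → x ≠ ⊥ →
      IsLeast {y : L | (y ≠ ⊥ ∧ y ≠ a) ∧ x ≤ tmap A a y} x) := by
  have ha_atom : IsAtom a := (hA a).1 ha
  have hbot : ⊥ ∉ A := fun h => ((hA ⊥).1 h).1 rfl
  have hB x (hx : x ≠ ⊥) (hxa : x ≠ a) : (Bset A a x).Nonempty :=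
    Bset_nonempty ha_atom (hAtomic x) hx hxa
  refine ⟨hB, fun x hx hxa => ⟨tmap_mem_delSet, tmap_ne_bot hbot (hB x hx hxa)⟩,
    fun x y _ _ _ _ hxy => tmap_monotone hxy, fun x hx hx_bot => ⟨?_, ?_⟩⟩
  · have hxa : x ≠ a := fun h => self_notMem_delSet ha_atom hbot (h ▸ hx)
    exact ⟨⟨hx_bot, hxa⟩, le_tmap_of_mem_delSet hx⟩
  · rintro y ⟨-, hxy⟩
    exact hxy.trans tmap_le

/-- For a graded atomic lattice `L` with atom set `A` and an atom
`a ∈ A`, with `L₁ = L∖{0,a}`: the map `t` is well defined (`B_x ≠ ∅` for `x ∈ L₁` and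
`t(x) ∈ L_a∖{0}`), `t` is order-preserving, and for every `x ∈ L_a∖{0}` the preimage
`t⁻¹({y ∈ L_a∖{0} : y ≥ x})` has minimum element `x`. -/
theorem tmap_well_defined_monotone_preimage_min
    {L : Type*} [Lattice L] [OrderBot L] [Fintype L] [DecidableEq L]
    (A : Finset L) (hA : ∀ a : L, a ∈ A ↔ IsAtom a)
    -- `L` is graded (by the standard rank function = height):
    (hGraded : ∀ x y : L, x ⋖ y → Order.height y = Order.height x + 1)
    -- `L` is atomic: every element is a join of atoms:
    (hAtomic : ∀ x : L, ∃ S ⊆ A, S.sup id = x)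
    (a : L) (ha : a ∈ A) :
    -- `B_x` is nonempty for `x ∈ L₁ = L∖{0,a}`:
    (∀ x : L, x ≠ ⊥ → x ≠ a → (Bset A a x).Nonempty) ∧
    -- `t` maps `L₁` into `L_a∖{0}`:
    (∀ x : L, x ≠ ⊥ → x ≠ a → tmap A a x ∈ DelSet A a ∧ tmap A a x ≠ ⊥) ∧
    -- `t` is a poset map:
    (∀ x y : L, x ≠ ⊥ → x ≠ a → y ≠ ⊥ → y ≠ a → x ≤ y → tmap A a x ≤ tmap A a y) ∧
    -- for `x ∈ L_a∖{0}`, the preimage of `{y ∈ L_a∖{0} : y ≥ x}` has minimum `x`: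
    (∀ x : L, x ∈ DelSet A a → x ≠ ⊥ →
      IsLeast {y : L | (y ≠ ⊥ ∧ y ≠ a) ∧ x ≤ tmap A a y} x) :=
  tmap_well_defined_monotone_preimage_min_general A hA hAtomic a ha
end
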